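/- Let V be a field, R = V⟨x_1,...,x_m⟩ with an admissible order, and I a V-submodule of R. Then R = I ⊕ ⟨⟨NonLM(I)⟩⟩ as V-modules; in particular every f ∈ R has a unique decomposition f = f_1 + N_I(f) with f_1 ∈ I and N_I(f) a V-linear combination of monomials not in LM(I). -/

import Mathlib

open MonoidAlgebra

/-- The monoid of noncommutative monomials (words) in `m` variables. -/
abbrev Mon (m : ℕ) := FreeMonoid (Fin m)

/-- An order on monomials is admissible if it is a well-order compatible with
multiplication on both sides, and every word is greater than its proper nonempty subwords. -/
def AdmissibleOrder (m : ℕ) [LinearOrder (Mon m)] : Prop :=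
  WellFoundedLT (Mon m) ∧
  (∀ p q r : Mon m, r ≠ 1 → p < q → p * r < q * r) ∧
  (∀ p q s : Mon m, s ≠ 1 → p < q → s * p < s * q) ∧
  (∀ p q r : Mon m, q ≠ 1 → r ≠ 1 → p = q * r → q < p ∧ r < p)

variable {m : ℕ} {V : Type} [CommRing V] [LinearOrder (Mon m)]

/-- Leading monomial of `f` (junk value `1` for `f = 0`). -/
noncomputable def lmOf (f : MonoidAlgebra V (Mon m)) : Mon m := f.coeff.support.max.unbotD 1

/-- Leading coefficient. -/
noncomputable def lcOf (f : MonoidAlgebra V (Mon m)) : V := f.coeff (lmOf f)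

/-- Leading term, as an element of the free algebra. -/
noncomputable def ltOf (f : MonoidAlgebra V (Mon m)) : MonoidAlgebra V (Mon m) :=
  MonoidAlgebra.single (lmOf f) (lcOf f)

/-- `LM(E)`: leading monomials of the nonzero elements of `E`. -/
def lmSet (E : Set (MonoidAlgebra V (Mon m))) : Set (Mon m) :=
  {p | ∃ f ∈ E, f ≠ 0 ∧ lmOf f = p}

/-- `LT(E)`: leading terms of the nonzero elements of `E`. -/
def ltSet (E : Set (MonoidAlgebra V (Mon m))) : Set (MonoidAlgebra V (Mon m)) :=
  {t | ∃ f ∈ E, f ≠ 0 ∧ t = ltOf f}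

/-- `V·LM(E)`: terms whose monomial is a leading monomial of `E`. -/
def vlm (E : Set (MonoidAlgebra V (Mon m))) : Set (MonoidAlgebra V (Mon m)) :=
  {t | ∃ a : V, ∃ p ∈ lmSet E, t = MonoidAlgebra.single p a}

/-- `V·LT(E)`: `V`-multiples of leading terms of nonzero elements of `E`. -/
def vlt (E : Set (MonoidAlgebra V (Mon m))) : Set (MonoidAlgebra V (Mon m)) :=
  {t | ∃ c : V, ∃ f ∈ E, f ≠ 0 ∧ t = c • ltOf f}

/-- The `V`-span `⟨⟨V·LM(E) \ V·LT(E)⟩⟩`. -/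
noncomputable def modB (E : Set (MonoidAlgebra V (Mon m))) :
    Submodule V (MonoidAlgebra V (Mon m)) :=
  Submodule.span V (vlm E \ vlt E)

/-- The `V`-span `⟨⟨NonLM(E)⟩⟩` of monomials that are not leading monomials of `E`. -/
noncomputable def modC (E : Set (MonoidAlgebra V (Mon m))) :
    Submodule V (MonoidAlgebra V (Mon m)) :=
  Submodule.span V {t | ∃ p ∉ lmSet E, t = MonoidAlgebra.single p (1 : V)}

/-- The term `a·p` divides the term `b·q`. -/
def termDvd (a : V) (p : Mon m) (b : V) (q : Mon m) : Prop :=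
  a ∣ b ∧ ∃ u v : Mon m, q = u * p * v

/-- `r` is a remainder of the division of `f` by `G`. -/
def IsRemainder (G : Set (MonoidAlgebra V (Mon m))) (f r : MonoidAlgebra V (Mon m)) : Prop :=
  (∃ n : ℕ, ∃ u v g : Fin n → MonoidAlgebra V (Mon m), (∀ i, g i ∈ G) ∧
      f = (∑ i, u i * g i * v i) + r ∧
      ∀ i, u i * g i * v i = 0 ∨ lmOf (u i * g i * v i) ≤ lmOf f) ∧
  ∀ g ∈ G, g ≠ 0 → ∀ p ∈ r.coeff.support, ¬ termDvd (lcOf g) (lmOf g) (r.coeff p) p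

/-- `O` is an overlap relation of `f` and `g` by `p` and `q`. -/
def IsOverlap (f g : MonoidAlgebra V (Mon m)) (p q : Mon m)
    (O : MonoidAlgebra V (Mon m)) : Prop :=
  (∃ c : V, lcOf g = lcOf f * c ∧
      O = (c • f) * MonoidAlgebra.single p 1 - MonoidAlgebra.single q 1 * g) ∨
  (∃ c : V, lcOf f = lcOf g * c ∧
      O = f * MonoidAlgebra.single p 1 - MonoidAlgebra.single q c * g)

lemma lm_spec {f : MonoidAlgebra V (Mon m)} (hf : f ≠ 0) :
    lmOf f ∈ f.coeff.support ∧ ∀ p ∈ f.coeff.support, p ≤ lmOf f := by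
  have h : f.coeff.support.Nonempty := Finsupp.support_nonempty_iff.mpr (by simpa using hf)
  obtain ⟨q, hq⟩ := Finset.max_of_nonempty h
  have hlm : lmOf f = q := by simp [lmOf, hq]
  refine ⟨hlm ▸ Finset.mem_of_max hq, fun p hp => ?_⟩
  have := Finset.le_max hp
  rw [hq, WithBot.coe_le_coe] at this
  exact hlm ▸ this

lemma modC_eq_supported (E : Set (MonoidAlgebra V (Mon m))) :
    modC E = MonoidAlgebra.supported V V {p | p ∉ lmSet E} := by
  rw [MonoidAlgebra.supported_eq_span_single, modC]
  congr 1
  ext t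
  constructor
  · rintro ⟨p, hp, rfl⟩; exact ⟨p, hp, rfl⟩
  · rintro ⟨p, hp, rfl⟩; exact ⟨p, hp, rfl⟩

lemma mem_modC_iff {E : Set (MonoidAlgebra V (Mon m))} {f : MonoidAlgebra V (Mon m)} :
    f ∈ modC E ↔ ∀ p ∈ f.coeff.support, p ∉ lmSet E := by
  rw [modC_eq_supported, MonoidAlgebra.mem_supported]
  rfl

lemma sup_step {P : Submodule V (MonoidAlgebra V (Mon m))} {f h : MonoidAlgebra V (Mon m)}
    (hf : f ≠ 0) (hh : h ∈ P) (hcoef : h.coeff (lmOf f) = f.coeff (lmOf f))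
    (hsupp : ∀ p ∈ h.coeff.support, p ≤ lmOf f)
    (IH : ∀ q, q < lmOf f → ∀ f' : MonoidAlgebra V (Mon m), lmOf f' = q → f' ∈ P) :
    f ∈ P := by
  by_cases h0 : f - h = 0
  · rw [sub_eq_zero] at h0; rwa [h0]
  · have hm := lm_spec h0
    have hle : ∀ p ∈ (f - h).coeff.support, p ≤ lmOf f := by
      intro p hp
      rcases Finset.mem_union.mp (Finsupp.support_sub hp) with h1 | h1
      · exact (lm_spec hf).2 p h1
      · exact hsupp p h1
    have hne : lmOf (f - h) ≠ lmOf f := by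
      intro he
      have hz : (f - h).coeff (lmOf (f - h)) ≠ 0 := Finsupp.mem_support_iff.mp hm.1
      apply hz
      rw [he, coeff_sub, Finsupp.sub_apply, hcoef, sub_self]
    have hlt : lmOf (f - h) < lmOf f := lt_of_le_of_ne (hle _ hm.1) hne
    have hmem := IH _ hlt (f - h) rfl
    have : f = (f - h) + h := by abel
    rw [this]
    exact add_mem hmem hh

/-- Over a field `V`, `R = I ⊕ ⟨⟨NonLM(I)⟩⟩` as `V`-modules; in particular every `f ∈ R`
has a unique decomposition `f = f₁ + N_I(f)` with `f₁ ∈ I` and `N_I(f)` a `V`-linear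
combination of monomials that are not leading monomials of `I`. -/
theorem normal_form_decomposition_field {m : ℕ} {V : Type} [Field V] [LinearOrder (Mon m)]
    (hadm : AdmissibleOrder m)
    (I : Submodule V (MonoidAlgebra V (Mon m))) :
    (I ⊓ modC (I : Set (MonoidAlgebra V (Mon m))) = ⊥ ∧
      I ⊔ modC (I : Set (MonoidAlgebra V (Mon m))) = ⊤) ∧
    ∀ f : MonoidAlgebra V (Mon m),
      ∃! d : MonoidAlgebra V (Mon m) × MonoidAlgebra V (Mon m),
        d.1 ∈ I ∧ d.2 ∈ modC (I : Set (MonoidAlgebra V (Mon m))) ∧ f = d.1 + d.2 := by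
  set S := modC (I : Set (MonoidAlgebra V (Mon m))) with hS
  have hinf : I ⊓ S = ⊥ := by
    rw [eq_bot_iff]
    intro f hfm
    obtain ⟨hfI, hfS⟩ := Submodule.mem_inf.mp hfm
    rw [Submodule.mem_bot]
    by_contra hf
    exact (mem_modC_iff.mp hfS (lmOf f) (lm_spec hf).1) ⟨f, hfI, hf, rfl⟩
  have hsup : I ⊔ S = ⊤ := by
    have key := hadm.1.wf
    have main : ∀ p : Mon m, ∀ f : MonoidAlgebra V (Mon m), lmOf f = p → f ∈ I ⊔ S := by
      refine fun p => key.induction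
        (C := fun p => ∀ f : MonoidAlgebra V (Mon m), lmOf f = p → f ∈ I ⊔ S) p ?_
      intro q IH f hfq
      subst hfq
      by_cases hf : f = 0
      · simp [hf]
      by_cases hmem : lmOf f ∈ lmSet (I : Set (MonoidAlgebra V (Mon m)))
      · obtain ⟨g, hgI, hg0, hglm⟩ := hmem
        have hgc : g.coeff (lmOf g) ≠ 0 := Finsupp.mem_support_iff.mp (lm_spec hg0).1
        set c : V := f.coeff (lmOf f) / g.coeff (lmOf g) with hc
        refine sup_step hf (Submodule.mem_sup_left (Submodule.smul_mem I c hgI)) ?_ ?_ IH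
        · rw [MonoidAlgebra.coeff_smul_apply, ← hglm, hc, smul_eq_mul, div_mul_cancel₀ _ hgc, hglm]
        · intro p hp
          have hp' : p ∈ g.coeff.support := Finsupp.support_smul hp
          exact hglm ▸ (lm_spec hg0).2 p hp'
      · refine sup_step (h := MonoidAlgebra.single (lmOf f) (f.coeff (lmOf f))) hf
          (Submodule.mem_sup_right ?_) ?_ ?_ IH
        · rw [hS, mem_modC_iff]
          intro p hp
          have : p = lmOf f := by
            by_contra hne
            exact hne (Finset.mem_singleton.mp (Finsupp.support_single_subset hp))
          rwa [this]
        · simp [MonoidAlgebra.coeff_single, Finsupp.single_apply]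
        · intro p hp
          have : p = lmOf f := Finset.mem_singleton.mp (Finsupp.support_single_subset hp)
          exact le_of_eq this
    rw [eq_top_iff]
    intro f _
    exact main (lmOf f) f rfl
  refine ⟨⟨hinf, hsup⟩, fun f => ?_⟩
  have hf : f ∈ I ⊔ S := hsup ▸ Submodule.mem_top
  obtain ⟨a, ha, b, hb, hab⟩ := Submodule.mem_sup.mp hf
  refine ⟨(a, b), ⟨ha, hb, hab.symm⟩, ?_⟩
  rintro ⟨a', b'⟩ ⟨ha', hb', hab'⟩
  have hz : a' - a ∈ I ⊓ S := by
    refine Submodule.mem_inf.mpr ⟨sub_mem ha' ha, ?_⟩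
    have : a' - a = b - b' := by
      have := hab' ▸ hab.symm
      linear_combination (norm := module) this
    rw [this]
    exact sub_mem hb hb'
  rw [hinf, Submodule.mem_bot, sub_eq_zero] at hz
  have hb2 : b' = b := by
    have h1 : a + b = a' + b' := by rw [← hab']; exact hab
    rw [hz] at h1
    exact (add_left_cancel h1).symm
  simp [hz, hb2]
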